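/- Let A be a symmetric n×n matrix over ℤ/4ℤ whose off-diagonal entries all lie in {0,1} and whose diagonal entries all lie in {0,2} (the alternating case). Let B over 𝔽₂ be A reduced modulo 2 entrywise (so B is symmetric with zero diagonal), and let r be the rank of B over 𝔽₂ (which is even). Define f : {0,1}^n → ℤ/4ℤ by f(x) = xᵀAx evaluated in ℤ/4ℤ. Then N_1(f) = N_3(f) = 0, and N_0(f) − N_2(f) is one of 0, 2^{n−r/2}, or −2^{n−r/2}. -/
import Mathlib

open Finset Matrix

namespace Stmt5Aux

/-- sign character on `ZMod 2`. -/
def chi (c : ZMod 2) : ℤ := if c = 0 then 1 else -1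

lemma chi_add : ∀ a b : ZMod 2, chi (a + b) = chi a * chi b := by decide

lemma chi_mul_self : ∀ a : ZMod 2, chi a * chi a = 1 := by decide

lemma chi_add_one : ∀ a : ZMod 2, chi (a + 1) = - chi a := by decide

/-- lift `ZMod 2 → ZMod 4`, `0 ↦ 0`, `1 ↦ 2`, additive. -/
def iot : ZMod 2 →+ ZMod 4 :=
  AddMonoidHom.mk' (fun c => 2 * ((c.val : ℕ) : ZMod 4)) (by decide)

lemma iot_inj : Function.Injective iot := by decide

lemma Dswap : ∀ a a' b b' : ZMod 2, ∀ c : ZMod 4, ∀ β : ZMod 2,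
    ((c = 0 ∧ β = 0) ∨ (c = 1 ∧ β = 1)) →
    (((a + a').val : ZMod 4) * c * ((b + b').val : ZMod 4)
      - (a.val : ZMod 4) * c * (b.val : ZMod 4)
      - (a'.val : ZMod 4) * c * (b'.val : ZMod 4)
      - iot (a * (β * b')))
    + (((b + b').val : ZMod 4) * c * ((a + a').val : ZMod 4)
      - (b.val : ZMod 4) * c * (a.val : ZMod 4)
      - (b'.val : ZMod 4) * c * (a'.val : ZMod 4)
      - iot (b * (β * a'))) = 0 := by decide

lemma Ddiag : ∀ a a' : ZMod 2, ∀ c : ZMod 4, (c = 0 ∨ c = 2) →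
    ((a + a').val : ZMod 4) * c * ((a + a').val : ZMod 4)
      - (a.val : ZMod 4) * c * (a.val : ZMod 4)
      - (a'.val : ZMod 4) * c * (a'.val : ZMod 4)
      - iot (a * ((0 : ZMod 2) * a')) = 0 := by decide

def e2 : Fin 2 ≃ ZMod 2 where
  toFun a := ((a : ℕ) : ZMod 2)
  invFun c := ⟨c.val, c.val_lt⟩
  left_inv := by decide
  right_inv := by decide

lemma e2_val : ∀ a : Fin 2, ((e2 a).val : ℕ) = (a : ℕ) := by decide

def eV (n : ℕ) : (Fin n → Fin 2) ≃ (Fin n → ZMod 2) :=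
  Equiv.piCongrRight fun _ => e2

lemma int_sq_pow (S : ℤ) (k : ℕ) (h : S ^ 2 = 2 ^ k) :
    Even k ∧ (S = 2 ^ (k / 2) ∨ S = -(2 ^ (k / 2))) := by
  have hm : S.natAbs ^ 2 = 2 ^ k := by
    have := congrArg Int.natAbs h
    rwa [Int.natAbs_pow, Int.natAbs_pow] at this
  have hdvd : S.natAbs ∣ 2 ^ k := ⟨S.natAbs, by rw [← hm]; ring⟩
  obtain ⟨t, ht, hmt⟩ := (Nat.dvd_prime_pow Nat.prime_two).mp hdvd
  have h2t : 2 ^ (2 * t) = 2 ^ k := by rw [← hm, hmt]; ring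
  have hk : 2 * t = k := Nat.pow_right_injective (le_refl 2) h2t
  refine ⟨⟨t, by omega⟩, ?_⟩
  have ht2 : k / 2 = t := by omega
  rcases Int.natAbs_eq S with h' | h'
  · left; rw [h', hmt, ht2]; push_cast; ring
  · right; rw [h', hmt, ht2]; push_cast; ring

variable {n : ℕ}

lemma addself (v : Fin n → ZMod 2) : ∀ w, w + v + v = w := by
  intro w; funext i
  show w i + v i + v i = w i
  have : ∀ a b : ZMod 2, a + b + b = a := by decide
  exact this _ _

/-- character sum over all vectors. -/
lemma sum_chi_dot (u : Fin n → ZMod 2) :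
    ∑ v : Fin n → ZMod 2, chi (v ⬝ᵥ u) = if u = 0 then (2 ^ n : ℤ) else 0 := by
  split_ifs with h
  · subst h
    have h1 : ∀ v : Fin n → ZMod 2, chi (v ⬝ᵥ (0 : Fin n → ZMod 2)) = 1 := by
      intro v; simp [chi]
    rw [Finset.sum_congr rfl fun v _ => h1 v, Finset.sum_const, Finset.card_univ]
    simp [ZMod.card]
  · obtain ⟨j, hj⟩ : ∃ j, u j ≠ 0 := by
      by_contra hc; push_neg at hc; exact h (funext hc)
    have hj1 : u j = 1 := by
      have : ∀ c : ZMod 2, c ≠ 0 → c = 1 := by decide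
      exact this _ hj
    refine Finset.sum_involution (fun v _ => v + Pi.single j 1) ?_ ?_
      (fun v _ => Finset.mem_univ _) ?_
    · intro v _
      rw [add_dotProduct, single_dotProduct, hj1, one_mul, chi_add_one]
      ring
    · intro v _ _ hc
      have := congrFun hc j
      simp at this
    · intro v _
      exact addself _ v

lemma sq_sum_chi (B : Matrix (Fin n) (Fin n) (ZMod 2)) (Q : (Fin n → ZMod 2) → ZMod 2)
    (hQ : ∀ v w, Q (v + w) = Q v + Q w + v ⬝ᵥ (B *ᵥ w)) :
    (∑ v : Fin n → ZMod 2, chi (Q v)) ^ 2 = 0 ∨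
    (∑ v : Fin n → ZMod 2, chi (Q v)) ^ 2
      = 2 ^ n * ((Finset.univ.filter fun z : Fin n → ZMod 2 => B *ᵥ z = 0).card : ℤ) := by
  have hsq : (∑ v : Fin n → ZMod 2, chi (Q v)) ^ 2
      = 2 ^ n * ∑ z ∈ (Finset.univ.filter fun z : Fin n → ZMod 2 => B *ᵥ z = 0), chi (Q z) := by
    calc (∑ v : Fin n → ZMod 2, chi (Q v)) ^ 2
        = ∑ v : Fin n → ZMod 2, ∑ w : Fin n → ZMod 2, chi (Q v) * chi (Q w) := by
          rw [sq, Finset.sum_mul_sum]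
      _ = ∑ v : Fin n → ZMod 2, ∑ z : Fin n → ZMod 2, chi (Q z) * chi (v ⬝ᵥ (B *ᵥ z)) := by
          refine Finset.sum_congr rfl fun v _ => ?_
          refine (Fintype.sum_bijective (fun z => v + z) (Equiv.addLeft v).bijective _ _
            fun z => ?_).symm
          rw [hQ, chi_add, chi_add, ← mul_assoc, ← mul_assoc, chi_mul_self, one_mul]
      _ = ∑ z : Fin n → ZMod 2, ∑ v : Fin n → ZMod 2, chi (Q z) * chi (v ⬝ᵥ (B *ᵥ z)) :=
          Finset.sum_comm
      _ = ∑ z : Fin n → ZMod 2, chi (Q z) * (if B *ᵥ z = 0 then (2 ^ n : ℤ) else 0) := by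
          refine Finset.sum_congr rfl fun z _ => ?_
          rw [← Finset.mul_sum, sum_chi_dot]
      _ = ∑ z ∈ (Finset.univ.filter fun z : Fin n → ZMod 2 => B *ᵥ z = 0),
            chi (Q z) * (2 ^ n : ℤ) := by
          rw [Finset.sum_filter]
          refine Finset.sum_congr rfl fun z _ => ?_
          split_ifs <;> simp
      _ = 2 ^ n * ∑ z ∈ (Finset.univ.filter fun z : Fin n → ZMod 2 => B *ᵥ z = 0),
            chi (Q z) := by
          rw [← Finset.sum_mul]; ring
  set K := (Finset.univ.filter fun z : Fin n → ZMod 2 => B *ᵥ z = 0) with hK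
  by_cases hall : ∀ z ∈ K, Q z = 0
  · right
    rw [hsq, Finset.sum_congr rfl fun z hz => by rw [hall z hz]]
    simp [chi]
  · left
    push_neg at hall
    obtain ⟨z0, hz0K, hz0⟩ := hall
    have hz01 : Q z0 = 1 := by
      have : ∀ c : ZMod 2, c ≠ 0 → c = 1 := by decide
      exact this _ hz0
    have hz0ker : B *ᵥ z0 = 0 := by simpa [hK] using hz0K
    have hzero : ∑ z ∈ K, chi (Q z) = 0 := by
      refine Finset.sum_involution (fun z _ => z + z0) ?_ ?_ ?_ ?_
      · intro z hz
        rw [hQ, hz01, hz0ker, dotProduct_zero, add_zero, chi_add_one]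
        ring
      · intro z hz h hc
        have hz00 : z0 = 0 := by
          funext i
          have := congrFun hc i
          simpa using this
        have hQ0 : Q 0 = 0 := by
          have h0 := hQ 0 0
          rw [add_zero, zero_dotProduct, add_zero] at h0
          have : ∀ a : ZMod 2, a = a + a → a = 0 := by decide
          exact this _ h0
        rw [hz00, hQ0] at hz01
        exact absurd hz01 (by decide)
      · intro z hz
        simp only [hK, Finset.mem_filter, Finset.mem_univ, true_and] at hz ⊢
        rw [Matrix.mulVec_add, hz, hz0ker, add_zero]
      · intro z hz
        exact addself z0 z
    rw [hsq, hzero, mul_zero]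

lemma sum_sq (q : (Fin n → ZMod 2) → ZMod 2) :
    ∑ c : Fin n → ZMod 2, (∑ v : Fin n → ZMod 2, chi (q v + c ⬝ᵥ v)) ^ 2 = 2 ^ (2 * n) := by
  have step1 : ∀ c : Fin n → ZMod 2, (∑ v : Fin n → ZMod 2, chi (q v + c ⬝ᵥ v)) ^ 2
      = ∑ v : Fin n → ZMod 2, ∑ w : Fin n → ZMod 2,
          chi (q v) * chi (q w) * (chi (c ⬝ᵥ (v + w))) := by
    intro c
    rw [sq, Finset.sum_mul_sum]
    refine Finset.sum_congr rfl fun v _ => Finset.sum_congr rfl fun w _ => ?_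
    rw [chi_add, chi_add, dotProduct_add, chi_add]
    ring
  calc ∑ c : Fin n → ZMod 2, (∑ v : Fin n → ZMod 2, chi (q v + c ⬝ᵥ v)) ^ 2
      = ∑ c : Fin n → ZMod 2, ∑ v : Fin n → ZMod 2, ∑ w : Fin n → ZMod 2,
          chi (q v) * chi (q w) * (chi (c ⬝ᵥ (v + w))) :=
        Finset.sum_congr rfl fun c _ => step1 c
    _ = ∑ v : Fin n → ZMod 2, ∑ c : Fin n → ZMod 2, ∑ w : Fin n → ZMod 2,
          chi (q v) * chi (q w) * (chi (c ⬝ᵥ (v + w))) := Finset.sum_comm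
    _ = ∑ v : Fin n → ZMod 2, ∑ w : Fin n → ZMod 2, ∑ c : Fin n → ZMod 2,
          chi (q v) * chi (q w) * (chi (c ⬝ᵥ (v + w))) :=
        Finset.sum_congr rfl fun v _ => Finset.sum_comm
    _ = ∑ v : Fin n → ZMod 2, ∑ w : Fin n → ZMod 2,
          chi (q v) * chi (q w) * (if v + w = 0 then (2 ^ n : ℤ) else 0) := by
        refine Finset.sum_congr rfl fun v _ => Finset.sum_congr rfl fun w _ => ?_
        rw [← Finset.mul_sum, sum_chi_dot]
    _ = ∑ v : Fin n → ZMod 2, chi (q v) * chi (q v) * (2 ^ n : ℤ) := by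
        refine Finset.sum_congr rfl fun v _ => ?_
        rw [Finset.sum_eq_single_of_mem v (Finset.mem_univ v)]
        · rw [if_pos (by funext i; exact (by decide : ∀ a : ZMod 2, a + a = 0) _)]
        · intro w _ hw
          rw [if_neg, mul_zero]
          intro hc
          apply hw
          funext i
          have h2 := congrFun hc i
          have : ∀ a b : ZMod 2, a + b = 0 → b = a := by decide
          exact this _ _ h2
    _ = 2 ^ (2 * n) := by
        rw [Finset.sum_congr rfl fun v _ => by rw [chi_mul_self, one_mul],
          Finset.sum_const, Finset.card_univ]
        have hcard : Fintype.card (Fin n → ZMod 2) = 2 ^ n := by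
          rw [Fintype.card_fun, ZMod.card, Fintype.card_fin]
        rw [hcard]
        ring

lemma card_ker (B : Matrix (Fin n) (Fin n) (ZMod 2)) :
    ∃ d : ℕ, B.rank + d = n ∧
      ((Finset.univ.filter fun z : Fin n → ZMod 2 => B *ᵥ z = 0).card = 2 ^ d) := by
  classical
  refine ⟨Module.finrank (ZMod 2) (LinearMap.ker B.mulVecLin), ?_, ?_⟩
  · rw [Matrix.rank]
    have := LinearMap.finrank_range_add_finrank_ker B.mulVecLin
    rw [Module.finrank_fintype_fun_eq_card, Fintype.card_fin] at this
    exact this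
  · haveI : Fintype ↥(LinearMap.ker B.mulVecLin) := Fintype.ofFinite _
    have h1 : (Finset.univ.filter fun z : Fin n → ZMod 2 => B *ᵥ z = 0).card
        = Fintype.card {z : Fin n → ZMod 2 // B *ᵥ z = 0} := (Fintype.card_subtype _).symm
    have h2 : Fintype.card {z : Fin n → ZMod 2 // B *ᵥ z = 0}
        = Fintype.card ↥(LinearMap.ker B.mulVecLin) := by
      refine Fintype.card_congr (Equiv.subtypeEquivRight fun z => ?_)
      rw [LinearMap.mem_ker, Matrix.mulVecLin_apply]
    rw [h1, h2, Module.card_eq_pow_finrank (K := ZMod 2), ZMod.card]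

/-- the quadratic map on `ZMod 2` vectors. -/
def Gq (A : Matrix (Fin n) (Fin n) (ZMod 4)) (v : Fin n → ZMod 2) : ZMod 4 :=
  ∑ i, ∑ j, ((v i).val : ZMod 4) * A i j * ((v j).val : ZMod 4)

variable {A : Matrix (Fin n) (Fin n) (ZMod 4)} (hA : A.IsSymm)
    (hoff : ∀ i j, i ≠ j → A i j = 0 ∨ A i j = 1)
    (hdiag : ∀ i, A i i = 0 ∨ A i i = 2)
    {B : Matrix (Fin n) (Fin n) (ZMod 2)}
    (hB : ∀ i j, B i j = ZMod.castHom (show (2:ℕ) ∣ 4 by norm_num) (ZMod 2) (A i j))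

include hA hdiag in
lemma two_mul_Gq (v : Fin n → ZMod 2) : 2 * Gq A v = 0 := by
  rw [Gq, ← Finset.sum_product', Finset.mul_sum,
    ← Finset.diag_union_offDiag (Finset.univ (α := Fin n)),
    Finset.sum_union (Finset.disjoint_diag_offDiag _), Finset.sum_diag]
  have hdz : ∀ i : Fin n, 2 * (((v i).val : ZMod 4) * A i i * ((v i).val : ZMod 4)) = 0 := by
    intro i
    have h2 : 2 * A i i = 0 := by rcases hdiag i with h | h <;> rw [h] <;> decide
    calc 2 * (((v i).val : ZMod 4) * A i i * ((v i).val : ZMod 4))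
        = ((v i).val : ZMod 4) * (2 * A i i) * ((v i).val : ZMod 4) := by ring
      _ = 0 := by rw [h2]; ring
  rw [Finset.sum_congr rfl fun i _ => hdz i, Finset.sum_const_zero, zero_add]
  refine Finset.sum_involution (fun p _ => p.swap) ?_ ?_ ?_ (fun p hp => rfl)
  · intro p hp
    have hsym : A p.2 p.1 = A p.1 p.2 := hA.apply p.1 p.2
    show 2 * (((v p.1).val : ZMod 4) * A p.1 p.2 * ((v p.2).val : ZMod 4))
        + 2 * (((v p.2).val : ZMod 4) * A p.2 p.1 * ((v p.1).val : ZMod 4)) = 0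
    rw [hsym]
    have h4 : ∀ x : ZMod 4, 2 * x + 2 * x = 0 := by decide
    calc 2 * (((v p.1).val : ZMod 4) * A p.1 p.2 * ((v p.2).val : ZMod 4))
        + 2 * (((v p.2).val : ZMod 4) * A p.1 p.2 * ((v p.1).val : ZMod 4))
        = 2 * (((v p.1).val : ZMod 4) * A p.1 p.2 * ((v p.2).val : ZMod 4))
        + 2 * (((v p.1).val : ZMod 4) * A p.1 p.2 * ((v p.2).val : ZMod 4)) := by ring
      _ = 0 := h4 _
  · intro p hp _ hc
    rw [Finset.mem_offDiag] at hp
    exact hp.2.2 (congrArg Prod.fst hc).symm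
  · intro p hp
    rw [Finset.mem_offDiag] at hp ⊢
    exact ⟨Finset.mem_univ _, Finset.mem_univ _, fun h => hp.2.2 h.symm⟩

include hA hdiag in
lemma Gq_mem (v : Fin n → ZMod 2) : Gq A v = 0 ∨ Gq A v = 2 := by
  have h := two_mul_Gq hA hdiag v
  have key : ∀ c : ZMod 4, 2 * c = 0 → c = 0 ∨ c = 2 := by decide
  exact key _ h

include hA hoff hdiag hB in
lemma Gq_add (v w : Fin n → ZMod 2) :
    Gq A (v + w) = Gq A v + Gq A w + iot (v ⬝ᵥ (B *ᵥ w)) := by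
  have hBA : ∀ i j, i ≠ j → (A i j = 0 ∧ B i j = 0) ∨ (A i j = 1 ∧ B i j = 1) := by
    intro i j hij
    rcases hoff i j hij with h | h
    · left; exact ⟨h, by rw [hB, h]; decide⟩
    · right; exact ⟨h, by rw [hB, h]; decide⟩
  have hBdiag : ∀ i, B i i = 0 := by
    intro i; rcases hdiag i with h | h <;> rw [hB, h] <;> decide
  have hBsym : ∀ i j, B j i = B i j := by
    intro i j; rw [hB, hB, hA.apply]
  have hbil : iot (v ⬝ᵥ (B *ᵥ w)) = ∑ i, ∑ j, iot (v i * (B i j * w j)) := by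
    rw [dotProduct, map_sum]
    refine Finset.sum_congr rfl fun i _ => ?_
    rw [Matrix.mulVec, dotProduct, Finset.mul_sum, map_sum]
  set D : Fin n × Fin n → ZMod 4 := fun p =>
    (((v p.1 + w p.1).val : ZMod 4)) * A p.1 p.2 * (((v p.2 + w p.2).val : ZMod 4))
      - (((v p.1).val : ZMod 4)) * A p.1 p.2 * (((v p.2).val : ZMod 4))
      - (((w p.1).val : ZMod 4)) * A p.1 p.2 * (((w p.2).val : ZMod 4))
      - iot (v p.1 * (B p.1 p.2 * w p.2)) with hD
  have key : ∑ p ∈ Finset.univ ×ˢ Finset.univ, D p = 0 := by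
    rw [← Finset.diag_union_offDiag (Finset.univ (α := Fin n)),
      Finset.sum_union (Finset.disjoint_diag_offDiag _), Finset.sum_diag]
    have h1 : ∀ i : Fin n, D (i, i) = 0 := by
      intro i
      rw [hD]
      simp only
      rw [hBdiag i]
      exact Ddiag (v i) (w i) (A i i) (hdiag i)
    rw [Finset.sum_congr rfl fun i _ => h1 i, Finset.sum_const_zero, zero_add]
    refine Finset.sum_involution (fun p _ => p.swap) ?_ ?_ ?_ (fun p hp => rfl)
    · intro p hp
      rw [Finset.mem_offDiag] at hp
      show D p + D p.swap = 0
      rw [hD]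
      simp only [Prod.fst_swap, Prod.snd_swap]
      rw [hA.apply p.1 p.2, hBsym p.1 p.2]
      exact Dswap (v p.1) (w p.1) (v p.2) (w p.2) (A p.1 p.2) (B p.1 p.2)
        (by rcases hBA p.1 p.2 hp.2.2 with h | h <;> [left; right] <;> exact h)
    · intro p hp _ hc
      rw [Finset.mem_offDiag] at hp
      exact hp.2.2 (congrArg Prod.fst hc).symm
    · intro p hp
      rw [Finset.mem_offDiag] at hp ⊢
      exact ⟨Finset.mem_univ _, Finset.mem_univ _, fun h => hp.2.2 h.symm⟩
  have hvw : Gq A (v + w) = ∑ p ∈ Finset.univ ×ˢ Finset.univ,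
      (((v p.1 + w p.1).val : ZMod 4)) * A p.1 p.2 * (((v p.2 + w p.2).val : ZMod 4)) := by
    rw [Gq, ← Finset.sum_product']
    rfl
  have hv : Gq A v = ∑ p ∈ Finset.univ ×ˢ Finset.univ,
      (((v p.1).val : ZMod 4)) * A p.1 p.2 * (((v p.2).val : ZMod 4)) := by
    rw [Gq, ← Finset.sum_product']
  have hw : Gq A w = ∑ p ∈ Finset.univ ×ˢ Finset.univ,
      (((w p.1).val : ZMod 4)) * A p.1 p.2 * (((w p.2).val : ZMod 4)) := by
    rw [Gq, ← Finset.sum_product']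
  have hb2 : iot (v ⬝ᵥ (B *ᵥ w)) = ∑ p ∈ Finset.univ ×ˢ Finset.univ,
      iot (v p.1 * (B p.1 p.2 * w p.2)) := by
    rw [hbil, ← Finset.sum_product']
  rw [hD] at key
  simp only [Finset.sum_sub_distrib] at key
  rw [hvw, hv, hw, hb2]
  linear_combination key

end Stmt5Aux

/-- `Ncount n f c` is the number of 0-1 vectors `x` with `f x = c` in `ℤ/4ℤ`. -/
def Ncount (n : ℕ) (f : (Fin n → Fin 2) → ZMod 4) (c : ZMod 4) : ℕ :=
  (Finset.univ.filter fun x => f x = c).card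

open Stmt5Aux in
theorem stmt_5 (n : ℕ) (A : Matrix (Fin n) (Fin n) (ZMod 4)) (hA : A.IsSymm)
    (hoff : ∀ i j, i ≠ j → A i j = 0 ∨ A i j = 1)
    (hdiag : ∀ i, A i i = 0 ∨ A i i = 2)
    (B : Matrix (Fin n) (Fin n) (ZMod 2))
    (hB : ∀ i j, B i j = ZMod.castHom (show (2:ℕ) ∣ 4 by norm_num) (ZMod 2) (A i j))
    (r : ℕ) (hr : r = B.rank)
    (f : (Fin n → Fin 2) → ZMod 4)
    (hf : ∀ x, f x = ∑ i, ∑ j, ((x i : ℕ) : ZMod 4) * A i j * ((x j : ℕ) : ZMod 4)) :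
    Even r ∧ Ncount n f 1 = 0 ∧ Ncount n f 3 = 0 ∧
    ((Ncount n f 0 : ℤ) - (Ncount n f 2 : ℤ) = 0 ∨
     (Ncount n f 0 : ℤ) - (Ncount n f 2 : ℤ) = 2 ^ (n - r / 2) ∨
     (Ncount n f 0 : ℤ) - (Ncount n f 2 : ℤ) = -(2 ^ (n - r / 2))) := by
  classical
  have hGmem : ∀ v, Gq A v = 0 ∨ Gq A v = 2 := fun v => Gq_mem hA hdiag v
  set q : (Fin n → ZMod 2) → ZMod 2 := fun v => if Gq A v = 0 then 0 else 1 with hq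
  have hGiot : ∀ v, Gq A v = iot (q v) := by
    intro v
    rcases hGmem v with h | h
    · have hq0 : q v = 0 := by rw [hq]; simp [h]
      rw [h, hq0]; exact (map_zero _).symm
    · have hq1 : q v = 1 := by
        rw [hq]; simp only [h]
        rw [if_neg (by decide)]
      rw [h, hq1]; decide
  have hpol : ∀ v w, q (v + w) = q v + q w + v ⬝ᵥ (B *ᵥ w) := by
    intro v w
    apply iot_inj
    show iot (q (v + w)) = iot (q v + q w + v ⬝ᵥ (B *ᵥ w))
    rw [map_add, map_add, ← hGiot, ← hGiot, ← hGiot]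
    exact Gq_add hA hoff hdiag hB v w
  have hfG : ∀ x, f x = Gq A (eV n x) := by
    intro x
    rw [hf x, Gq]
    refine Finset.sum_congr rfl fun i _ => Finset.sum_congr rfl fun j _ => ?_
    have h1 : ∀ k, ((eV n x) k).val = ((x k : ℕ)) := fun k => e2_val (x k)
    rw [h1 i, h1 j]
  have hN : ∀ c, Ncount n f c = ((Finset.univ.filter fun v => Gq A v = c).card) := by
    intro c
    refine Finset.card_equiv (eV n) fun x => ?_
    simp only [Finset.mem_filter, Finset.mem_univ, true_and]
    rw [hfG x]
  have hN1 : Ncount n f 1 = 0 := by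
    rw [hN 1, Finset.card_eq_zero, Finset.filter_eq_empty_iff]
    intro v _
    rcases hGmem v with h | h <;> rw [h] <;> decide
  have hN3 : Ncount n f 3 = 0 := by
    rw [hN 3, Finset.card_eq_zero, Finset.filter_eq_empty_iff]
    intro v _
    rcases hGmem v with h | h <;> rw [h] <;> decide
  have hchi : ∀ v, chi (q v) = if Gq A v = 0 then (1:ℤ) else -1 := by
    intro v
    have hqv : q v = if Gq A v = 0 then 0 else 1 := rfl
    rw [hqv]
    by_cases h : Gq A v = 0
    · rw [if_pos h, if_pos h]; decide
    · rw [if_neg h, if_neg h]; decide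
  have hfilter : (Finset.univ.filter fun v : Fin n → ZMod 2 => ¬ Gq A v = 0)
      = Finset.univ.filter fun v => Gq A v = 2 := by
    apply Finset.filter_congr
    intro v _
    rcases hGmem v with h | h
    · simp [h, show ¬ ((0:ZMod 4) = 2) by decide]
    · simp [h, show ¬ ((2:ZMod 4) = 0) by decide]
  have hS : (Ncount n f 0 : ℤ) - (Ncount n f 2 : ℤ) = ∑ v : Fin n → ZMod 2, chi (q v) := by
    rw [hN 0, hN 2,
      Finset.sum_congr rfl fun v _ => hchi v, Finset.sum_ite, hfilter,
      Finset.sum_const, Finset.sum_const]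
    simp only [nsmul_eq_mul, mul_one, mul_neg_one]
    ring
  obtain ⟨d, hrd, hKcard⟩ := card_ker B
  have hpolc : ∀ c : Fin n → ZMod 2, ∀ v w,
      (fun v => q v + c ⬝ᵥ v) (v + w)
        = (fun v => q v + c ⬝ᵥ v) v + (fun v => q v + c ⬝ᵥ v) w + v ⬝ᵥ (B *ᵥ w) := by
    intro c v w
    simp only
    rw [hpol, dotProduct_add]
    ring
  have hevr : Even r := by
    have hex : ∃ c : Fin n → ZMod 2,
        (∑ v : Fin n → ZMod 2, chi (q v + c ⬝ᵥ v)) ^ 2 ≠ 0 := by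
      by_contra hc
      push_neg at hc
      have hss := sum_sq (n := n) q
      rw [Finset.sum_congr rfl fun c _ => hc c, Finset.sum_const_zero] at hss
      exact absurd hss.symm (by positivity)
    obtain ⟨c0, hc0⟩ := hex
    rcases sq_sum_chi B (fun v => q v + c0 ⬝ᵥ v) (hpolc c0) with h0 | h2
    · exact absurd h0 hc0
    · rw [hKcard] at h2
      push_cast at h2
      rw [← pow_add] at h2
      have hev := (int_sq_pow _ _ h2).1
      have h1 := Nat.even_iff.mp hev
      rw [Nat.even_iff]
      omega
  refine ⟨hevr, hN1, hN3, ?_⟩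
  rcases sq_sum_chi B q hpol with h0 | h2
  · left
    rw [hS]
    exact sq_eq_zero_iff.mp h0
  · rw [hKcard] at h2
    push_cast at h2
    rw [← pow_add] at h2
    obtain ⟨hev2, hpm⟩ := int_sq_pow _ _ h2
    have heq : (n + d) / 2 = n - r / 2 := by
      have h1 := Nat.even_iff.mp hev2
      have h2' := Nat.even_iff.mp hevr
      omega
    rcases hpm with h | h
    · right; left; rw [hS, h, heq]
    · right; right; rw [hS, h, heq]
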